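/- Let u : ℝ² → ℝ be a C³ solution of u_yy = (u_y + y)·u_xx − u_x·u_xy − 2. Then the function v(x,y) := 4u − 3x·u_x − 2y·u_y satisfies the linearized equation v_yy = (u_y + y)·v_xx + u_xx·v_y − u_x·v_xy − u_xy·v_x at every point of ℝ². -/

import Mathlib

/-!
Equation (2) is invariant under the scaling `(x, y, u) ↦ (λ³x, λ²y, λ⁴u)`, and `φ₀ = E₄ u` is its
characteristic, where `Eₐ = a - 3x∂ₓ - 2y∂_y`. Differentiation shifts the weight of this Euler
operator, `∂ₓ Eₐ = Eₐ₋₃ ∂ₓ` and `∂_y Eₐ = Eₐ₋₂ ∂_y`, so every derivative of `φ₀` is an Euler operator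
applied to a derivative of `u`. Since each term of (2) has weight `0`, the linearized operator
applied to `φ₀` is then `-(3x∂ₓ + 2y∂_y)` applied to (2), which vanishes.
-/

/-- Partial derivative of `f : ℝ² → ℝ` in the direction `v`. -/
noncomputable def pd2 (v : ℝ × ℝ) (f : ℝ × ℝ → ℝ) : ℝ × ℝ → ℝ :=
  fun p => fderiv ℝ f p v

noncomputable def dx : (ℝ × ℝ → ℝ) → ℝ × ℝ → ℝ := pd2 (1, 0)
noncomputable def dy : (ℝ × ℝ → ℝ) → ℝ × ℝ → ℝ := pd2 (0, 1)

section PartialDerivatives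

variable {f g : ℝ × ℝ → ℝ} {p w : ℝ × ℝ}

lemma pd2_add (hf : DifferentiableAt ℝ f p) (hg : DifferentiableAt ℝ g p) :
    pd2 w (fun q => f q + g q) p = pd2 w f p + pd2 w g p := by
  simp [pd2, fderiv_fun_add hf hg]

lemma pd2_sub (hf : DifferentiableAt ℝ f p) (hg : DifferentiableAt ℝ g p) :
    pd2 w (fun q => f q - g q) p = pd2 w f p - pd2 w g p := by
  simp [pd2, fderiv_fun_sub hf hg]

lemma pd2_sub_const (c : ℝ) : pd2 w (fun q => f q - c) p = pd2 w f p := by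
  simp [pd2, fderiv_sub_const]

lemma pd2_mul (hf : DifferentiableAt ℝ f p) (hg : DifferentiableAt ℝ g p) :
    pd2 w (fun q => f q * g q) p = pd2 w f p * g p + f p * pd2 w g p := by
  simp only [pd2, fderiv_fun_mul hf hg, add_apply, smul_apply, smul_eq_mul]
  ring

lemma pd2_const_mul (hf : DifferentiableAt ℝ f p) (c : ℝ) :
    pd2 w (fun q => c * f q) p = c * pd2 w f p := by
  simp [pd2, fderiv_const_mul hf]

lemma pd2_fst : pd2 w (fun q : ℝ × ℝ => q.1) p = w.1 := by
  simp [pd2, fderiv_fst]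

lemma pd2_snd : pd2 w (fun q : ℝ × ℝ => q.2) p = w.2 := by
  simp [pd2, fderiv_snd]

lemma ContDiff.pd2 {n m : WithTop ℕ∞} (hf : ContDiff ℝ n f) (h : m + 1 ≤ n) (w : ℝ × ℝ) :
    ContDiff ℝ m (pd2 w f) :=
  (ContinuousLinearMap.apply ℝ ℝ w).contDiff.comp (hf.fderiv_right h)

lemma pd2_comm (hf : ContDiff ℝ 2 f) (v w : ℝ × ℝ) : pd2 w (pd2 v f) = pd2 v (pd2 w f) := by
  ext p
  have hd : DifferentiableAt ℝ (fderiv ℝ f) p :=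
    ((hf.fderiv_right (m := 1) le_rfl).differentiable one_ne_zero).differentiableAt
  change fderiv ℝ (fun q => fderiv ℝ f q v) p w = fderiv ℝ (fun q => fderiv ℝ f q w) p v
  rw [fderiv_clm_apply hd (differentiableAt_const v), fderiv_clm_apply hd (differentiableAt_const w)]
  simpa using hf.contDiffAt.isSymmSndFDerivAt (by simp) w v

lemma dy_dx_comm (hf : ContDiff ℝ 2 f) : dy (dx f) = dx (dy f) :=
  pd2_comm hf _ _

end PartialDerivatives

noncomputable def weightedEuler (a b c : ℝ) (f : ℝ × ℝ → ℝ) : ℝ × ℝ → ℝ :=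
  fun q => a * f q - b * q.1 * dx f q - c * q.2 * dy f q

section WeightedEuler

variable {f : ℝ × ℝ → ℝ}

lemma pd2_weightedEuler (hf : ContDiff ℝ 2 f) (a b c : ℝ) (w p : ℝ × ℝ) :
    pd2 w (weightedEuler a b c f) p = a * pd2 w f p - b * w.1 * dx f p
      - b * p.1 * pd2 w (dx f) p - c * w.2 * dy f p - c * p.2 * pd2 w (dy f) p := by
  have hf' : Differentiable ℝ f := hf.differentiable (by norm_num)
  have hfx : Differentiable ℝ (dx f) := (hf.pd2 le_rfl _).differentiable one_ne_zero
  have hfy : Differentiable ℝ (dy f) := (hf.pd2 le_rfl _).differentiable one_ne_zero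
  unfold weightedEuler
  rw [pd2_sub (by fun_prop) (by fun_prop), pd2_sub (by fun_prop) (by fun_prop),
    pd2_const_mul (by fun_prop), pd2_mul (by fun_prop) (by fun_prop), pd2_const_mul (by fun_prop),
    pd2_fst, pd2_mul (by fun_prop) (by fun_prop), pd2_const_mul (by fun_prop), pd2_snd]
  ring

lemma dx_weightedEuler (hf : ContDiff ℝ 2 f) (a b c : ℝ) :
    dx (weightedEuler a b c f) = weightedEuler (a - b) b c (dx f) := by
  ext p
  have hdx : pd2 (1, 0) = dx := rfl
  rw [dx, pd2_weightedEuler hf, hdx]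
  simp only [weightedEuler, dy_dx_comm hf]
  ring

lemma dy_weightedEuler (hf : ContDiff ℝ 2 f) (a b c : ℝ) :
    dy (weightedEuler a b c f) = weightedEuler (a - c) b c (dy f) := by
  ext p
  have hdy : pd2 (0, 1) = dy := rfl
  rw [dy, pd2_weightedEuler hf, hdy]
  simp only [weightedEuler, dy_dx_comm hf]
  ring

end WeightedEuler

lemma pd2_dy_dy_of_eq {u : ℝ × ℝ → ℝ} (hu : ContDiff ℝ 3 u)
    (heq : ∀ p : ℝ × ℝ,
      dy (dy u) p = (dy u p + p.2) * dx (dx u) p - dx u p * dx (dy u) p - 2) (w p : ℝ × ℝ) :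
    pd2 w (dy (dy u)) p = (pd2 w (dy u) p + w.2) * dx (dx u) p
      + (dy u p + p.2) * pd2 w (dx (dx u)) p - pd2 w (dx u) p * dx (dy u) p
      - dx u p * pd2 w (dx (dy u)) p := by
  have hux : ContDiff ℝ 2 (dx u) := hu.pd2 (by norm_num) _
  have huy : ContDiff ℝ 2 (dy u) := hu.pd2 (by norm_num) _
  have hd_ux : Differentiable ℝ (dx u) := hux.differentiable (by norm_num)
  have hd_uy : Differentiable ℝ (dy u) := huy.differentiable (by norm_num)
  have hd_uxx : Differentiable ℝ (dx (dx u)) := (hux.pd2 le_rfl _).differentiable one_ne_zero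
  have hd_uxy : Differentiable ℝ (dx (dy u)) := (huy.pd2 le_rfl _).differentiable one_ne_zero
  rw [funext heq, pd2_sub_const, pd2_sub (by fun_prop) (by fun_prop),
    pd2_mul (by fun_prop) (by fun_prop), pd2_mul (by fun_prop) (by fun_prop),
    pd2_add (by fun_prop) (by fun_prop), pd2_snd]
  ring

theorem phi_0_is_symmetry (u : ℝ × ℝ → ℝ) (hu : ContDiff ℝ 3 u)
    (heq : ∀ p : ℝ × ℝ,
      dy (dy u) p = (dy u p + p.2) * dx (dx u) p - dx u p * dx (dy u) p - 2) :
    ∀ p : ℝ × ℝ,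
      (fun v : ℝ × ℝ → ℝ =>
        dy (dy v) p = (dy u p + p.2) * dx (dx v) p + dx (dx u) p * dy v p
          - dx u p * dx (dy v) p - dx (dy u) p * dx v p)
      (fun q => 4 * u q - 3 * q.1 * dx u q - 2 * q.2 * dy u q) := by
  intro p
  have hu2 : ContDiff ℝ 2 u := hu.of_le (by norm_num)
  have hux : ContDiff ℝ 2 (dx u) := hu.pd2 (by norm_num) _
  have huy : ContDiff ℝ 2 (dy u) := hu.pd2 (by norm_num) _
  have heq_x := pd2_dy_dy_of_eq hu heq (1, 0) p
  have heq_y := pd2_dy_dy_of_eq hu heq (0, 1) p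
  simp only [show pd2 (1, 0) = dx from rfl, show pd2 (0, 1) = dy from rfl] at heq_x heq_y
  rw [show (fun q => 4 * u q - 3 * q.1 * dx u q - 2 * q.2 * dy u q) = weightedEuler 4 3 2 u from rfl,
    dy_weightedEuler hu2, dx_weightedEuler hu2, dy_weightedEuler huy, dx_weightedEuler huy,
    dx_weightedEuler hux]
  simp only [weightedEuler]
  rw [dy_dx_comm hu2] at heq_y ⊢
  linear_combination (-3 * p.1) * heq_x + (-2 * p.2) * heq_y
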